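/- Let α ≥ 1 and 0 < p < 2. For measurable F on the upper half-space ℝ^{n+1}_+, define S_α(F)(x) = (∫_{Γ_α(x)} |F(y,t)|² dy dt / t^{n+1})^{1/2} where Γ_α(x) = {(y,t) : |x−y| < αt}. Then there is a constant c_p (depending only on n and p) such that ‖S_α(F)‖_{L^{p,∞}} ≤ c_p α^{n/p} ‖S_1(F)‖_{L^{p,∞}}, assuming the change-of-aperture inequality ∫_{ℝⁿ∖U_λ} S_α(F)² dx ≤ 2αⁿ ∫_{ℝⁿ∖Ω_λ} S_1(F)² dx, where Ω_λ = {S_1(F) > λ} and U_λ = {M χ_{Ω_λ} > 1/(2α)ⁿ} with M the Hardy–Littlewood maximal operator. -/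

import Mathlib

/-!
Put `Ω = {S₁F > λ}` and `U = {M 1_Ω > 1/(2αⁿ)}`. By Vitali's covering lemma
`|U| ≤ 2·5ⁿαⁿ|Ω| ≤ 2·5ⁿαⁿ (‖S₁F‖/λ)^p`. If a ball `B(y, αt)` meets `ℝⁿ ∖ U`, then `Ω` fills at
most half of `B(y, t)`, so `|B(y, αt) ∖ U| ≤ 2αⁿ |B(y, t) ∖ Ω|`; integrating `|F(y,t)|²/t^{n+1}`
against this (Fubini) gives `∫_{ℝⁿ∖U} (S_αF)² ≤ 2αⁿ ∫_{ℝⁿ∖Ω} (S₁F)²`. Since `p < 2`, the layer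
cake formula bounds the right side by `λ^{2-p} ‖S₁F‖^p` up to a constant, and Chebyshev's
inequality turns this into `|{S_αF > λ} ∖ U| ≲ αⁿ (‖S₁F‖/λ)^p`.
-/

open MeasureTheory Metric Set Module
open scoped ENNReal NNReal

/-- The square function `S_α(F)(x) = (∫_{Γ_α(x)} |F(y,t)|² dy dt/t^{n+1})^{1/2}`
over the cone `Γ_α(x) = {(y,t) : |x-y| < α t}` in the upper half space. -/
noncomputable def coneSquare (n : ℕ) (F : EuclideanSpace ℝ (Fin n) → ℝ → ℝ)
    (a : ℝ) (x : EuclideanSpace ℝ (Fin n)) : ℝ≥0∞ :=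
  (∫⁻ q in {q : EuclideanSpace ℝ (Fin n) × ℝ | 0 < q.2 ∧ dist x q.1 < a * q.2},
      ENNReal.ofReal |F q.1 q.2| ^ 2 / ENNReal.ofReal (q.2 ^ (n + 1))) ^ (1 / 2 : ℝ)

/-- The weak `L^p` quasinorm `sup_{λ>0} λ |{g > λ}|^{1/p}` of an `ℝ≥0∞`-valued
function. -/
noncomputable def weakNorm (n : ℕ) (p : ℝ)
    (g : EuclideanSpace ℝ (Fin n) → ℝ≥0∞) : ℝ≥0∞ :=
  ⨆ t : ℝ≥0, (t : ℝ≥0∞) * (volume {x | (t : ℝ≥0∞) < g x}) ^ (1 / p)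

section DenseBalls

variable {E : Type*} [PseudoMetricSpace E] [MeasurableSpace E] (μ : Measure E)

def denseBalls (Ω : Set E) (τ : ℝ≥0∞) : Set (E × ℝ) :=
  {b | τ * μ (ball b.1 b.2) < μ (Ω ∩ ball b.1 b.2)}

/-- The superlevel set `{M 1_Ω > τ}` of the uncentered maximal function over balls. -/
def maximalSuperlevel (Ω : Set E) (τ : ℝ≥0∞) : Set E :=
  ⋃ b ∈ denseBalls μ Ω τ, ball b.1 b.2

variable {μ}

theorem measure_ball_le_inv_mul_of_mem_denseBalls {Ω : Set E} {τ : ℝ≥0∞} (hτ : τ ≠ ⊤)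
    {b : E × ℝ} (hb : b ∈ denseBalls μ Ω τ) :
    μ (ball b.1 b.2) ≤ τ⁻¹ * μ (Ω ∩ ball b.1 b.2) := by
  rw [← ENNReal.div_eq_inv_mul, ENNReal.le_div_iff_mul_le (Or.inr (pos_of_gt hb).ne')
    (Or.inl hτ), mul_comm]
  exact hb.le

theorem pos_of_mem_denseBalls {Ω : Set E} {τ : ℝ≥0∞} {b : E × ℝ}
    (hb : b ∈ denseBalls μ Ω τ) : 0 < b.2 := by
  by_contra! h
  simp [denseBalls, ball_eq_empty.2 h] at hb

end DenseBalls

section AddHaar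

variable {E : Type*} [NormedAddCommGroup E] [NormedSpace ℝ E] [FiniteDimensional ℝ E]
  [MeasurableSpace E] [BorelSpace E] {μ : Measure E} [μ.IsAddHaarMeasure]

variable (μ) in
theorem addHaar_ball_mul_radius {c : ℝ} (hc : 0 < c) (x : E) (r : ℝ) :
    μ (ball x (c * r)) = ENNReal.ofReal c ^ finrank ℝ E * μ (ball x r) := by
  rcases le_or_gt r 0 with hr | hr
  · rw [ball_eq_empty.2 hr, ball_eq_empty.2 (mul_nonpos_of_nonneg_of_nonpos hc.le hr)]
    simp
  · rw [Measure.addHaar_ball_mul_of_pos μ x hc, Measure.addHaar_ball_center μ x r,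
      ENNReal.ofReal_pow hc.le]

/-- Vitali's covering lemma, which needs the radius bound `R`. -/
theorem measure_biUnion_ball_le_of_subset_denseBalls {Ω : Set E} (hΩ : MeasurableSet Ω)
    {τ : ℝ≥0∞} (hτ : τ ≠ ⊤) {t : Set (E × ℝ)} (ht : t ⊆ denseBalls μ Ω τ) {R : ℝ}
    (hR : ∀ b ∈ t, b.2 ≤ R) :
    μ (⋃ b ∈ t, ball b.1 b.2) ≤ 5 ^ finrank ℝ E * τ⁻¹ * μ Ω := by
  obtain ⟨u, hut, hdisj, hcover⟩ :=
    Vitali.exists_disjoint_subfamily_covering_enlargement_ball t Prod.fst Prod.snd R hR 5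
      (by norm_num)
  have hu : u.Countable := hdisj.countable_of_isOpen (fun _ _ => isOpen_ball)
    fun b hb => nonempty_ball.2 (pos_of_mem_denseBalls (ht (hut hb)))
  calc μ (⋃ b ∈ t, ball b.1 b.2)
      ≤ μ (⋃ b ∈ u, ball b.1 (5 * b.2)) := by
        refine measure_mono (iUnion₂_subset fun b hb => ?_)
        obtain ⟨c, hc, hbc⟩ := hcover b hb
        exact hbc.trans (subset_biUnion_of_mem (u := fun c : E × ℝ => ball c.1 (5 * c.2)) hc)
    _ ≤ ∑' b : u, μ (ball b.1.1 (5 * b.1.2)) := measure_biUnion_le μ hu _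
    _ ≤ ∑' b : u, 5 ^ finrank ℝ E * τ⁻¹ * μ (Ω ∩ ball b.1.1 b.1.2) := by
        refine ENNReal.tsum_le_tsum fun b => ?_
        rw [addHaar_ball_mul_radius μ (by norm_num : (0 : ℝ) < 5), ENNReal.ofReal_ofNat,
          mul_assoc]
        gcongr
        exact measure_ball_le_inv_mul_of_mem_denseBalls hτ (ht (hut b.2))
    _ = 5 ^ finrank ℝ E * τ⁻¹ * μ (⋃ b ∈ u, Ω ∩ ball b.1 b.2) := by
        rw [ENNReal.tsum_mul_left, measure_biUnion hu
          (hdisj.mono fun _ => inter_subset_right) fun _ _ => hΩ.inter measurableSet_ball]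
    _ ≤ 5 ^ finrank ℝ E * τ⁻¹ * μ Ω := by
        gcongr
        exact iUnion₂_subset fun _ _ => inter_subset_left

theorem measure_maximalSuperlevel_le {Ω : Set E} (hΩ : MeasurableSet Ω) {τ : ℝ≥0∞}
    (hτ : τ ≠ ⊤) : μ (maximalSuperlevel μ Ω τ) ≤ 5 ^ finrank ℝ E * τ⁻¹ * μ Ω := by
  have hexhaust : maximalSuperlevel μ Ω τ =
      ⋃ N : ℕ, ⋃ b ∈ denseBalls μ Ω τ ∩ {b | b.2 ≤ N}, ball b.1 b.2 := by
    ext x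
    simp only [maximalSuperlevel, mem_iUnion, mem_inter_iff, exists_prop]
    constructor
    · rintro ⟨b, hb, hx⟩
      exact ⟨⌈b.2⌉₊, b, ⟨hb, show b.2 ≤ _ from Nat.le_ceil _⟩, hx⟩
    · rintro ⟨N, b, ⟨hb, -⟩, hx⟩
      exact ⟨b, hb, hx⟩
  rw [hexhaust, Monotone.measure_iUnion]
  · exact iSup_le fun N => measure_biUnion_ball_le_of_subset_denseBalls hΩ hτ
      inter_subset_left fun b hb => hb.2
  · intro N N' hNN'
    exact biUnion_subset_biUnion_left fun b hb =>
      ⟨hb.1, show b.2 ≤ (N' : ℝ) from hb.2.trans (by exact_mod_cast hNN')⟩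

/-- A ball `B(y, α r)` meeting the complement of the maximal superlevel set has density at most
`1/(2αᵈ)` in `Ω`, so `Ω` fills at most half of `B(y, r)`. -/
theorem measure_ball_inter_compl_maximalSuperlevel_le (Ω : Set E) {α : ℝ} (hα : 1 ≤ α)
    (y : E) (r : ℝ) :
    μ (ball y (α * r) ∩ (maximalSuperlevel μ Ω (2 * ENNReal.ofReal α ^ finrank ℝ E)⁻¹)ᶜ) ≤
      2 * ENNReal.ofReal α ^ finrank ℝ E * μ (ball y r ∩ Ωᶜ) := by
  set c := ENNReal.ofReal α ^ finrank ℝ E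
  have hc0 : c ≠ 0 := pow_ne_zero _ (ENNReal.ofReal_pos.2 (by linarith)).ne'
  have hctop : c ≠ ⊤ := ENNReal.pow_ne_top ENNReal.ofReal_ne_top
  rcases (ball y (α * r) ∩ (maximalSuperlevel μ Ω (2 * c)⁻¹)ᶜ).eq_empty_or_nonempty with
    hempty | ⟨x, hxB, hxU⟩
  · simp [hempty]
  have hr : 0 < r := pos_of_mul_pos_right (pos_of_mem_ball hxB) (by linarith)
  have hsparse : (y, α * r) ∉ denseBalls μ Ω (2 * c)⁻¹ := fun hb =>
    hxU (mem_biUnion (t := fun b : E × ℝ => ball b.1 b.2) hb hxB)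
  have hscale : μ (ball y (α * r)) = c * μ (ball y r) :=
    addHaar_ball_mul_radius μ (by linarith) y r
  have hΩ : 2 * μ (Ω ∩ ball y r) ≤ μ (ball y r) :=
    calc 2 * μ (Ω ∩ ball y r)
        ≤ 2 * μ (Ω ∩ ball y (α * r)) := by
          gcongr
          exact le_mul_of_one_le_left hr.le hα
      _ ≤ 2 * ((2 * c)⁻¹ * μ (ball y (α * r))) := by gcongr; exact not_lt.1 hsparse
      _ = μ (ball y r) := by
          rw [hscale, mul_left_comm, ← mul_assoc 2 c, ← mul_assoc,
            ENNReal.inv_mul_cancel (mul_ne_zero two_ne_zero hc0)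
              (ENNReal.mul_ne_top (by simp) hctop), one_mul]
  have hcompl : μ (ball y r) ≤ 2 * μ (ball y r ∩ Ωᶜ) := by
    refine ENNReal.le_of_add_le_add_left (measure_ball_lt_top (μ := μ) (x := y) (r := r)).ne ?_
    calc μ (ball y r) + μ (ball y r)
        = 2 * μ (ball y r) := (two_mul _).symm
      _ ≤ 2 * (μ (Ω ∩ ball y r) + μ (ball y r ∩ Ωᶜ)) := by
          rw [inter_comm Ω]
          gcongr
          exact measure_le_inter_add_sdiff μ (ball y r) Ω
      _ ≤ μ (ball y r) + 2 * μ (ball y r ∩ Ωᶜ) := by rw [mul_add]; gcongr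
  calc μ (ball y (α * r) ∩ (maximalSuperlevel μ Ω (2 * c)⁻¹)ᶜ)
      ≤ μ (ball y (α * r)) := measure_mono inter_subset_left
    _ = c * μ (ball y r) := hscale
    _ ≤ 2 * c * μ (ball y r ∩ Ωᶜ) := by rw [mul_comm 2 c, mul_assoc]; gcongr

end AddHaar

theorem lintegral_Ioc_ofReal_rpow {r : ℝ} (hr : -1 < r) {t : ℝ} (ht : 0 ≤ t) :
    ∫⁻ s in Ioc 0 t, ENNReal.ofReal (s ^ r) = ENNReal.ofReal (t ^ (r + 1) / (r + 1)) := by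
  have hint : IntegrableOn (fun s : ℝ => s ^ r) (Ioc 0 t) :=
    (intervalIntegrable_iff_integrableOn_Ioc_of_le ht).1
      (intervalIntegral.intervalIntegrable_rpow' hr)
  rw [← ofReal_integral_eq_lintegral_ofReal hint
    ((ae_restrict_iff' measurableSet_Ioc).2 (.of_forall fun s hs => Real.rpow_nonneg hs.1.le r)),
    ← intervalIntegral.integral_of_le ht, integral_rpow (Or.inl hr),
    Real.zero_rpow (by linarith), sub_zero]

section WeakType

variable {X : Type*} [MeasurableSpace X] {μ : Measure X} {g : X → ℝ≥0∞}

theorem setLIntegral_le_sq_le_lintegral_meas_lt (hg : Measurable g) (t : ℝ≥0) :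
    ∫⁻ x in {x | g x ≤ t}, g x ^ 2 ∂μ ≤
      2 * ∫⁻ s in Ioc 0 (t : ℝ), μ {x | ENNReal.ofReal s < g x} * ENNReal.ofReal s := by
  set S := {x | g x ≤ t}
  have hS : MeasurableSet S := hg measurableSet_Iic
  have hfinite : ∀ x ∈ S, g x ≠ ⊤ := fun x hx => ne_top_of_le_ne_top ENNReal.coe_ne_top hx
  have htail : ∀ s ∈ Ioi (0 : ℝ),
      μ.restrict S {x | s < (g x).toReal} * ENNReal.ofReal (s ^ (2 - 1 : ℝ)) ≤
        (Iic (t : ℝ)).indicator (fun s => μ {x | ENNReal.ofReal s < g x} * ENNReal.ofReal s) s := by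
    intro s hs
    rw [Measure.restrict_apply' hS, show (2 - 1 : ℝ) = 1 by norm_num, Real.rpow_one]
    by_cases hst : s ≤ t
    · rw [indicator_of_mem (show s ∈ Iic (t : ℝ) from hst)]
      gcongr
      exact fun x hx => (ENNReal.ofReal_lt_iff_lt_toReal hs.le (hfinite x hx.2)).2 hx.1
    · have hempty : {x | s < (g x).toReal} ∩ S = ∅ := by
        refine eq_empty_of_forall_notMem fun x hx => hst (hx.1.le.trans ?_)
        simpa using ENNReal.toReal_mono ENNReal.coe_ne_top hx.2
      simp [hempty]
  calc ∫⁻ x in S, g x ^ 2 ∂μ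
      = ∫⁻ x in S, ENNReal.ofReal ((g x).toReal ^ (2 : ℝ)) ∂μ := by
        refine setLIntegral_congr_fun hS fun x hx => ?_
        rw [Real.rpow_two, ENNReal.ofReal_pow ENNReal.toReal_nonneg,
          ENNReal.ofReal_toReal (hfinite x hx)]
    _ = ENNReal.ofReal 2 * ∫⁻ s in Ioi 0,
          μ.restrict S {x | s < (g x).toReal} * ENNReal.ofReal (s ^ (2 - 1 : ℝ)) :=
        lintegral_rpow_eq_lintegral_meas_lt_mul (μ := μ.restrict S)
          (.of_forall fun _ => ENNReal.toReal_nonneg) hg.ennreal_toReal.aemeasurable two_pos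
    _ ≤ 2 * ∫⁻ s in Ioc 0 (t : ℝ), μ {x | ENNReal.ofReal s < g x} * ENNReal.ofReal s := by
        rw [ENNReal.ofReal_ofNat, ← Iic_inter_Ioi, ← Measure.restrict_restrict measurableSet_Iic,
          ← lintegral_indicator measurableSet_Iic]
        gcongr 2 * ?_
        exact setLIntegral_mono' measurableSet_Ioi htail

theorem setLIntegral_le_sq_le_of_meas_lt_le (hg : Measurable g) {p : ℝ} (hp : 0 < p)
    (hp2 : p < 2) {A : ℝ≥0∞}
    (hA : ∀ s : ℝ≥0, s ≠ 0 → μ {x | (s : ℝ≥0∞) < g x} ≤ (A / s) ^ p) (t : ℝ≥0) :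
    ∫⁻ x in {x | g x ≤ t}, g x ^ 2 ∂μ ≤
      ENNReal.ofReal (2 / (2 - p)) * A ^ p * (t : ℝ≥0∞) ^ (2 - p) := by
  have hlevel : ∀ s ∈ Ioc 0 (t : ℝ), μ {x | ENNReal.ofReal s < g x} * ENNReal.ofReal s ≤
      A ^ p * ENNReal.ofReal (s ^ (1 - p)) := fun s hs =>
    calc μ {x | ENNReal.ofReal s < g x} * ENNReal.ofReal s
        ≤ (A / ENNReal.ofReal s) ^ p * ENNReal.ofReal s := by
          gcongr
          exact hA s.toNNReal (by simpa using hs.1)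
      _ = A ^ p * ENNReal.ofReal (s ^ (1 - p)) := by
          rw [ENNReal.div_rpow_of_nonneg _ _ hp.le, div_eq_mul_inv, ← ENNReal.rpow_neg,
            ENNReal.ofReal_rpow_of_pos hs.1, mul_assoc,
            ← ENNReal.ofReal_mul (Real.rpow_nonneg hs.1.le _), sub_eq_neg_add,
            Real.rpow_add hs.1, Real.rpow_one]
  calc ∫⁻ x in {x | g x ≤ t}, g x ^ 2 ∂μ
      ≤ 2 * ∫⁻ s in Ioc 0 (t : ℝ), A ^ p * ENNReal.ofReal (s ^ (1 - p)) := by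
        refine (setLIntegral_le_sq_le_lintegral_meas_lt hg t).trans ?_
        gcongr 2 * ?_
        exact setLIntegral_mono' measurableSet_Ioc hlevel
    _ = ENNReal.ofReal (2 / (2 - p)) * A ^ p * (t : ℝ≥0∞) ^ (2 - p) := by
        rw [lintegral_const_mul _ (by fun_prop),
          lintegral_Ioc_ofReal_rpow (by linarith) t.coe_nonneg,
          show 1 - p + 1 = 2 - p by ring, ← ENNReal.ofReal_coe_nnreal,
          ENNReal.ofReal_rpow_of_nonneg t.coe_nonneg (by linarith), div_eq_mul_inv,
          div_eq_mul_inv, ENNReal.ofReal_mul (by positivity), ENNReal.ofReal_mul zero_le_two,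
          ENNReal.ofReal_ofNat]
        ring

end WeakType

section Cone

variable {E : Type*} [PseudoMetricSpace E]

def cone (x : E) (a : ℝ) : Set (E × ℝ) :=
  {q | 0 < q.2 ∧ dist x q.1 < a * q.2}

theorem mem_cone_iff_mem_ball {a : ℝ} (ha : 0 ≤ a) {x : E} {q : E × ℝ} :
    q ∈ cone x a ↔ x ∈ ball q.1 (a * q.2) := by
  rw [cone, mem_ofPred_eq, mem_ball]
  constructor
  · exact fun h => h.2
  · intro h
    refine ⟨?_, h⟩
    by_contra! hq
    exact (dist_nonneg.trans_lt h).not_ge (mul_nonpos_of_nonneg_of_nonpos ha hq)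

variable [MeasurableSpace E] [OpensMeasurableSpace E]

theorem measurableSet_cone (x : E) (a : ℝ) : MeasurableSet (cone x a) :=
  (measurableSet_lt measurable_const measurable_snd).inter
    (measurableSet_lt (continuous_const.dist continuous_fst).measurable
      (measurable_const.mul measurable_snd))

theorem measurable_uncurry_cone_indicator [SecondCountableTopology E] {f : E × ℝ → ℝ≥0∞}
    (hf : Measurable f) (a : ℝ) :
    Measurable (Function.uncurry fun x q => (cone x a).indicator f q) :=
  (hf.comp measurable_snd).indicator <|
    (measurableSet_lt measurable_const measurable_snd.snd).inter
      (measurableSet_lt (continuous_fst.dist continuous_snd.fst).measurable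
        (measurable_const.mul measurable_snd.snd))

end Cone

section SquareFunction

variable {n : ℕ} {F : EuclideanSpace ℝ (Fin n) → ℝ → ℝ}

noncomputable def coneIntegrand (n : ℕ) (F : EuclideanSpace ℝ (Fin n) → ℝ → ℝ)
    (q : EuclideanSpace ℝ (Fin n) × ℝ) : ℝ≥0∞ :=
  ENNReal.ofReal |F q.1 q.2| ^ 2 / ENNReal.ofReal (q.2 ^ (n + 1))

theorem measurable_coneIntegrand
    (hF : Measurable fun q : EuclideanSpace ℝ (Fin n) × ℝ => F q.1 q.2) :
    Measurable (coneIntegrand n F) :=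
  ((ENNReal.measurable_ofReal.comp hF.abs).pow_const 2).div
    (ENNReal.measurable_ofReal.comp (measurable_snd.pow_const (n + 1)))

theorem coneSquare_eq_lintegral_indicator (F : EuclideanSpace ℝ (Fin n) → ℝ → ℝ) (a : ℝ)
    (x : EuclideanSpace ℝ (Fin n)) :
    coneSquare n F a x = (∫⁻ q, (cone x a).indicator (coneIntegrand n F) q) ^ (1 / 2 : ℝ) := by
  rw [lintegral_indicator (measurableSet_cone x a)]
  rfl

theorem coneSquare_sq (F : EuclideanSpace ℝ (Fin n) → ℝ → ℝ) (a : ℝ)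
    (x : EuclideanSpace ℝ (Fin n)) :
    coneSquare n F a x ^ 2 = ∫⁻ q, (cone x a).indicator (coneIntegrand n F) q := by
  rw [coneSquare_eq_lintegral_indicator, ← ENNReal.rpow_natCast, ← ENNReal.rpow_mul]
  norm_num

theorem measurable_coneSquare
    (hF : Measurable fun q : EuclideanSpace ℝ (Fin n) × ℝ => F q.1 q.2) (a : ℝ) :
    Measurable (coneSquare n F a) := by
  rw [funext (coneSquare_eq_lintegral_indicator F a)]
  exact (measurable_uncurry_cone_indicator (measurable_coneIntegrand hF) a).lintegral_prod_right'
    |>.pow_const _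

theorem setLIntegral_coneSquare_sq
    (hF : Measurable fun q : EuclideanSpace ℝ (Fin n) × ℝ => F q.1 q.2) {a : ℝ} (ha : 0 ≤ a)
    (W : Set (EuclideanSpace ℝ (Fin n))) :
    ∫⁻ x in W, coneSquare n F a x ^ 2 =
      ∫⁻ q, coneIntegrand n F q * volume (ball q.1 (a * q.2) ∩ W) := by
  simp only [coneSquare_sq]
  rw [lintegral_lintegral_swap
    (measurable_uncurry_cone_indicator (measurable_coneIntegrand hF) a).aemeasurable]
  refine lintegral_congr fun q => ?_
  have hball : ∀ x, (cone x a).indicator (coneIntegrand n F) q =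
      (ball q.1 (a * q.2)).indicator (fun _ => coneIntegrand n F q) x := fun x => by
    by_cases hx : x ∈ ball q.1 (a * q.2)
    · rw [indicator_of_mem hx, indicator_of_mem ((mem_cone_iff_mem_ball ha).2 hx)]
    · rw [indicator_of_notMem hx, indicator_of_notMem (mt (mem_cone_iff_mem_ball ha).1 hx)]
  simp only [hball]
  rw [lintegral_indicator_const measurableSet_ball, Measure.restrict_apply measurableSet_ball]

end SquareFunction

section WeakNorm

variable {n : ℕ} {p : ℝ} {g : EuclideanSpace ℝ (Fin n) → ℝ≥0∞}

theorem volume_lt_le_weakNorm_div_rpow (hp : 0 < p) {s : ℝ≥0} (hs : s ≠ 0) :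
    volume {x | (s : ℝ≥0∞) < g x} ≤ (weakNorm n p g / s) ^ p := by
  have hle : (s : ℝ≥0∞) * volume {x | (s : ℝ≥0∞) < g x} ^ (1 / p) ≤ weakNorm n p g :=
    le_iSup (fun t : ℝ≥0 => (t : ℝ≥0∞) * volume {x | (t : ℝ≥0∞) < g x} ^ (1 / p)) s
  rw [← ENNReal.rpow_inv_rpow hp.ne' (volume _), ← one_div]
  gcongr
  rwa [ENNReal.le_div_iff_mul_le (Or.inl (by exact_mod_cast hs)) (Or.inl ENNReal.coe_ne_top),
    mul_comm]

theorem weakNorm_le_of_volume_lt_le (hp : 0 < p) {K A : ℝ≥0∞}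
    (h : ∀ s : ℝ≥0, s ≠ 0 → volume {x | (s : ℝ≥0∞) < g x} ≤ K * (A / s) ^ p) :
    weakNorm n p g ≤ K ^ (1 / p) * A := by
  refine iSup_le fun s => ?_
  rcases eq_or_ne s 0 with rfl | hs
  · simp
  calc (s : ℝ≥0∞) * volume {x | (s : ℝ≥0∞) < g x} ^ (1 / p)
      ≤ s * (K * (A / s) ^ p) ^ (1 / p) := by gcongr; exact h s hs
    _ = K ^ (1 / p) * (s * (A / s)) := by
        rw [ENNReal.mul_rpow_of_nonneg _ _ (by positivity), ← ENNReal.rpow_mul,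
          mul_one_div_cancel hp.ne', ENNReal.rpow_one]
        ring
    _ = K ^ (1 / p) * A := by
        rw [ENNReal.mul_div_cancel (by exact_mod_cast hs) ENNReal.coe_ne_top]

end WeakNorm

section ChangeOfAperture

variable {n : ℕ} {F : EuclideanSpace ℝ (Fin n) → ℝ → ℝ} {α : ℝ}

theorem setLIntegral_compl_maximalSuperlevel_coneSquare_sq_le
    (hF : Measurable fun q : EuclideanSpace ℝ (Fin n) × ℝ => F q.1 q.2) (hα : 1 ≤ α)
    (Ω : Set (EuclideanSpace ℝ (Fin n))) :
    ∫⁻ x in (maximalSuperlevel volume Ω (2 * ENNReal.ofReal α ^ n)⁻¹)ᶜ,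
        coneSquare n F α x ^ 2 ≤
      2 * ENNReal.ofReal α ^ n * ∫⁻ x in Ωᶜ, coneSquare n F 1 x ^ 2 := by
  rw [setLIntegral_coneSquare_sq hF (by linarith), setLIntegral_coneSquare_sq hF zero_le_one,
    ← lintegral_const_mul' _ _ (by finiteness)]
  refine lintegral_mono fun q => ?_
  have hball := measure_ball_inter_compl_maximalSuperlevel_le (μ := volume) Ω hα q.1 q.2
  rw [finrank_euclideanSpace_fin] at hball
  rw [one_mul, mul_left_comm]
  exact mul_le_mul_right hball _

theorem volume_lt_coneSquare_inter_compl_le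
    (hF : Measurable fun q : EuclideanSpace ℝ (Fin n) × ℝ => F q.1 q.2) (hα : 1 ≤ α)
    {p : ℝ} (hp : 0 < p) (hp2 : p < 2) {s : ℝ≥0} (hs : s ≠ 0) :
    volume ({x | (s : ℝ≥0∞) < coneSquare n F α x} ∩
        (maximalSuperlevel volume {x | (s : ℝ≥0∞) < coneSquare n F 1 x}
          (2 * ENNReal.ofReal α ^ n)⁻¹)ᶜ) ≤
      2 * ENNReal.ofReal α ^ n * ENNReal.ofReal (2 / (2 - p)) *
        (weakNorm n p (coneSquare n F 1) / s) ^ p := by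
  set A := weakNorm n p (coneSquare n F 1)
  set Ω := {x | (s : ℝ≥0∞) < coneSquare n F 1 x}
  set U := maximalSuperlevel volume Ω (2 * ENNReal.ofReal α ^ n)⁻¹
  have hs' : (s : ℝ≥0∞) ≠ 0 := by exact_mod_cast hs
  have hmeas : MeasurableSet {x | (s : ℝ≥0∞) ^ 2 ≤ coneSquare n F α x ^ 2} :=
    measurableSet_le measurable_const ((measurable_coneSquare hF α).pow_const 2)
  have htrunc : ∫⁻ x in Ωᶜ, coneSquare n F 1 x ^ 2 ≤
      ENNReal.ofReal (2 / (2 - p)) * A ^ p * (s : ℝ≥0∞) ^ (2 - p) := by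
    rw [show Ωᶜ = {x | coneSquare n F 1 x ≤ s} by ext; simp [Ω]]
    exact setLIntegral_le_sq_le_of_meas_lt_le (measurable_coneSquare hF 1) hp hp2
      (fun t ht => volume_lt_le_weakNorm_div_rpow hp ht) s
  have hpow : A ^ p * (s : ℝ≥0∞) ^ (2 - p) / (s : ℝ≥0∞) ^ 2 = (A / s) ^ p := by
    rw [sub_eq_add_neg, ENNReal.rpow_add _ _ hs' ENNReal.coe_ne_top, ENNReal.rpow_two,
      mul_left_comm, mul_comm, ENNReal.mul_div_cancel_right (pow_ne_zero 2 hs') (by finiteness),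
      ENNReal.div_rpow_of_nonneg _ _ hp.le, div_eq_mul_inv, ENNReal.rpow_neg]
  calc volume ({x | (s : ℝ≥0∞) < coneSquare n F α x} ∩ Uᶜ)
      ≤ volume.restrict Uᶜ {x | (s : ℝ≥0∞) ^ 2 ≤ coneSquare n F α x ^ 2} := by
        rw [Measure.restrict_apply hmeas]
        refine measure_mono (inter_subset_inter_left _ fun x hx => ?_)
        exact pow_le_pow_left₀ zero_le (le_of_lt (show (s : ℝ≥0∞) < _ from hx)) 2
    _ ≤ (∫⁻ x in Uᶜ, coneSquare n F α x ^ 2) / (s : ℝ≥0∞) ^ 2 :=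
        meas_ge_le_lintegral_div ((measurable_coneSquare hF α).pow_const 2).aemeasurable
          (pow_ne_zero 2 hs') (by finiteness)
    _ ≤ 2 * ENNReal.ofReal α ^ n * ENNReal.ofReal (2 / (2 - p)) *
          (A ^ p * (s : ℝ≥0∞) ^ (2 - p)) / (s : ℝ≥0∞) ^ 2 := by
        gcongr
        refine (setLIntegral_compl_maximalSuperlevel_coneSquare_sq_le hF hα Ω).trans ?_
        rw [mul_assoc _ _ (A ^ p * _), ← mul_assoc _ (A ^ p)]
        gcongr
    _ = 2 * ENNReal.ofReal α ^ n * ENNReal.ofReal (2 / (2 - p)) * (A / s) ^ p := by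
        rw [mul_div_assoc, hpow]

theorem volume_lt_coneSquare_le
    (hF : Measurable fun q : EuclideanSpace ℝ (Fin n) × ℝ => F q.1 q.2) (hα : 1 ≤ α)
    {p : ℝ} (hp : 0 < p) (hp2 : p < 2) {s : ℝ≥0} (hs : s ≠ 0) :
    volume {x | (s : ℝ≥0∞) < coneSquare n F α x} ≤
      (2 * 5 ^ n + 2 * ENNReal.ofReal (2 / (2 - p))) * ENNReal.ofReal α ^ n *
        (weakNorm n p (coneSquare n F 1) / s) ^ p := by
  set c := ENNReal.ofReal α ^ n
  set Ω := {x | (s : ℝ≥0∞) < coneSquare n F 1 x}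
  set U := maximalSuperlevel volume Ω (2 * c)⁻¹
  have hc : c ≠ 0 := pow_ne_zero _ (ENNReal.ofReal_pos.2 (by linarith)).ne'
  have hU : volume U ≤ 5 ^ n * (2 * c) * volume Ω := by
    have := measure_maximalSuperlevel_le (μ := volume) (Ω := Ω)
      (measurable_coneSquare hF 1 measurableSet_Ioi)
      (ENNReal.inv_ne_top.2 (mul_ne_zero two_ne_zero hc))
    rwa [finrank_euclideanSpace_fin, inv_inv] at this
  calc volume {x | (s : ℝ≥0∞) < coneSquare n F α x}
      ≤ volume U + volume ({x | (s : ℝ≥0∞) < coneSquare n F α x} ∩ Uᶜ) :=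
        (measure_le_inter_add_sdiff _ _ U).trans
          (add_le_add (measure_mono inter_subset_right) le_rfl)
    _ ≤ 5 ^ n * (2 * c) * (weakNorm n p (coneSquare n F 1) / s) ^ p +
          2 * c * ENNReal.ofReal (2 / (2 - p)) * (weakNorm n p (coneSquare n F 1) / s) ^ p :=
        add_le_add (hU.trans (by gcongr; exact volume_lt_le_weakNorm_div_rpow hp hs))
          (volume_lt_coneSquare_inter_compl_le hF hα hp hp2 hs)
    _ = (2 * 5 ^ n + 2 * ENNReal.ofReal (2 / (2 - p))) * c *
          (weakNorm n p (coneSquare n F 1) / s) ^ p := by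
        ring

end ChangeOfAperture

/-- Change of aperture in weak `L^p`, `0 < p < 2`:
`‖S_α F‖_{L^{p,∞}} ≤ c_p α^{n/p} ‖S_1 F‖_{L^{p,∞}}`, assuming the weak (1,1) bound
for the Hardy–Littlewood maximal operator `M` and the good-λ change-of-aperture
inequality `∫_{ℝⁿ∖U_λ} S_α(F)² ≤ 2αⁿ ∫_{ℝⁿ∖Ω_λ} S_1(F)²`. -/
theorem weak_aperture_bound (n : ℕ) (p : ℝ) (hp : 0 < p ∧ p < 2) (cM : ℝ≥0∞) :
    ∃ C : ℝ≥0∞, C ≠ ⊤ ∧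
      ∀ (F : EuclideanSpace ℝ (Fin n) → ℝ → ℝ)
        (_ : Measurable fun q : EuclideanSpace ℝ (Fin n) × ℝ => F q.1 q.2)
        (α : ℝ) (_ : 1 ≤ α)
        (M : Set (EuclideanSpace ℝ (Fin n)) → EuclideanSpace ℝ (Fin n) → ℝ≥0∞)
        (_ : ∀ (E : Set (EuclideanSpace ℝ (Fin n))) (t : ℝ≥0∞), 0 < t →
              volume {x | t < M E x} ≤ cM * volume E / t)
        (_ : ∀ lam : ℝ≥0, 0 < lam →
              ∫⁻ x in {x | ¬ (ENNReal.ofReal (2 * α) ^ n)⁻¹ <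
                  M {y | (lam : ℝ≥0∞) < coneSquare n F 1 y} x},
                (coneSquare n F α x) ^ 2 ≤
              ENNReal.ofReal (2 * α ^ n) *
                ∫⁻ x in {x | coneSquare n F 1 x ≤ (lam : ℝ≥0∞)},
                  (coneSquare n F 1 x) ^ 2),
        weakNorm n p (coneSquare n F α) ≤
          C * ENNReal.ofReal α ^ (n / p) * weakNorm n p (coneSquare n F 1) := by
  obtain ⟨hp, hp2⟩ := hp
  set D : ℝ≥0∞ := 2 * 5 ^ n + 2 * ENNReal.ofReal (2 / (2 - p))
  refine ⟨D ^ (1 / p), ENNReal.rpow_ne_top_of_nonneg (by positivity) (by finiteness), ?_⟩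
  intro F hF α hα _ _ _
  calc weakNorm n p (coneSquare n F α)
      ≤ (D * ENNReal.ofReal α ^ n) ^ (1 / p) * weakNorm n p (coneSquare n F 1) :=
        weakNorm_le_of_volume_lt_le hp fun s hs => volume_lt_coneSquare_le hF hα hp hp2 hs
    _ = D ^ (1 / p) * ENNReal.ofReal α ^ (n / p) * weakNorm n p (coneSquare n F 1) := by
        rw [ENNReal.mul_rpow_of_nonneg _ _ (by positivity),
          ← ENNReal.rpow_natCast (ENNReal.ofReal α), ← ENNReal.rpow_mul, mul_one_div]
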